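/- arXiv:2205.01200 — 2 statements merged into one kernel-verified Lean document; each statement's English description precedes it below -/
import Mathlib

section
/- For any generator enriched lattice (L,G), the minor poset M(L,G) is graded, with rank function given by rk(∅) = 0 and rk(K,H) = |H| + 1 for each minor (K,H). -/
open Finset

/-- A generator-enriched lattice datum inside an ambient lattice `L`:
a minimal element `z` together with a finite generating set of elements
strictly above `z`. The underlying set of elements consists of all joins
of `z` with subsets of the generating set. -/
structure GEL (L : Type*) [Lattice L] [DecidableEq L] where
  z : L
  gens : Finset L
  lt_gens : ∀ g ∈ gens, z < g

namespace GEL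

variable {L K : Type*} [Lattice L] [OrderBot L] [DecidableEq L]

/-- The underlying set of elements of a generator enriched lattice. -/
def carrier (M : GEL L) : Finset L :=
  M.gens.powerset.image fun X => X.sup id ⊔ M.z

/-- Deletion of a set of generators. -/
def delete (M : GEL L) (I : Finset L) : GEL L :=
  ⟨M.z, M.gens \ I, fun g hg => M.lt_gens g (Finset.mem_sdiff.mp hg).1⟩

/-- Restriction to a set of generators. -/
def restrict (M : GEL L) (I : Finset L) : GEL L :=
  M.delete (M.gens \ I)

/-- Contraction by a set of generators. -/
def contract (M : GEL L) (I : Finset L) : GEL L :=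
  ⟨I.sup id ⊔ M.z,
   (M.gens.image fun g => g ⊔ (I.sup id ⊔ M.z)).erase (I.sup id ⊔ M.z),
   fun g hg => by
     obtain ⟨hne, hg'⟩ := Finset.mem_erase.mp hg
     obtain ⟨h, -, rfl⟩ := Finset.mem_image.mp hg'
     exact lt_of_le_of_ne le_sup_right (Ne.symm hne)⟩

open Classical in
/-- Contraction by an element: contract by all generators below it. -/
noncomputable def contractEl (M : GEL L) (ℓ : L) : GEL L :=
  M.contract (M.gens.filter fun g => g ≤ ℓ)

/-- A single deletion or contraction step. -/
def Step (M N : GEL L) : Prop :=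
  ∃ I ⊆ M.gens, N = M.delete I ∨ N = M.contract I

/-- `Minor M N` : `N` is a minor of `M`, i.e. obtained from `M` by a finite
sequence of deletions and contractions. -/
def Minor (M N : GEL L) : Prop :=
  Relation.ReflTransGen Step M N

/-- The generator enriched lattice on a lattice with `⊥`, with the given generating set. -/
def ofGens (G : Finset L) (hG : ∀ g ∈ G, (⊥ : L) < g) : GEL L :=
  ⟨⊥, G, hG⟩

/-- The underlying type of the minor poset of `T`: all minors of `T`
together with an adjoined minimum `none`. -/
abbrev MP (T : GEL L) := Option {M : GEL L // T.Minor M}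

/-- The order relation of the minor poset. -/
def mple (T : GEL L) : MP T → MP T → Prop
  | none, _ => True
  | some _, none => False
  | some A, some B => B.1.Minor A.1

/-- The rank function of the minor poset. -/
def mrank (T : GEL L) : MP T → ℕ
  | none => 0
  | some A => A.1.gens.card + 1

/-- A parallel: an element `ℓ` and distinct generators `g, h` with
`g ⊔ ℓ = h ⊔ ℓ ≠ ℓ`. -/
def HasParallel (M : GEL L) : Prop :=
  ∃ ℓ ∈ M.carrier, ∃ g ∈ M.gens, ∃ h ∈ M.gens,
    g ≠ h ∧ g ⊔ ℓ = h ⊔ ℓ ∧ g ⊔ ℓ ≠ ℓ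

/-- Isomorphism of generator enriched lattices: a join-preserving bijection of the
underlying sets carrying the generating set onto the generating set. -/
def GIso [Lattice K] [OrderBot K] [DecidableEq K] (M : GEL L) (N : GEL K) : Prop :=
  ∃ f : L → K, Set.BijOn f ↑M.carrier ↑N.carrier ∧
    (∀ a ∈ M.carrier, ∀ b ∈ M.carrier, f (a ⊔ b) = f a ⊔ f b) ∧
    f '' ↑M.gens = ↑N.gens

open Classical in
/-- The image generator enriched lattice `⟨f(I) | f(z)⟩` of a strong map. -/
noncomputable def map [Lattice K] [DecidableEq K] (f : L → K) (M : GEL L) : GEL K :=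
  ⟨f M.z, (M.gens.image f).filter fun y => f M.z < y,
   fun g hg => (Finset.mem_filter.mp hg).2⟩

/-- `T` lifts join irreducibles: for every `ℓ` and generator `g` with `g ≰ ℓ`,
the element `g ⊔ ℓ` is join irreducible in the interval `[ℓ, ⊤]`. -/
def LiftsJI (T : GEL L) : Prop :=
  ∀ ℓ : L, ∀ g ∈ T.gens, ¬ g ≤ ℓ →
    ∀ a b : L, ℓ ≤ a → ℓ ≤ b → g ⊔ ℓ = a ⊔ b → g ⊔ ℓ = a ∨ g ⊔ ℓ = b

end GEL

namespace GEL

variable {L : Type*} [Lattice L] [OrderBot L] [DecidableEq L]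

lemma ext' {M N : GEL L} (h1 : M.z = N.z) (h2 : M.gens = N.gens) : M = N := by
  cases M; cases N; cases h1; cases h2; rfl

lemma delete_z (M : GEL L) (I : Finset L) : (M.delete I).z = M.z := rfl

lemma delete_gens (M : GEL L) (I : Finset L) : (M.delete I).gens = M.gens \ I := rfl

lemma contract_z (M : GEL L) (I : Finset L) : (M.contract I).z = I.sup id ⊔ M.z := rfl

lemma contract_gens (M : GEL L) (I : Finset L) :
    (M.contract I).gens
      = (M.gens.image fun g => g ⊔ (I.sup id ⊔ M.z)).erase (I.sup id ⊔ M.z) := rfl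

lemma contract_z' (M : GEL L) (i : L) : (M.contract {i}).z = i ⊔ M.z := by
  simp [contract_z]

lemma contract_gens' (M : GEL L) (i : L) :
    (M.contract {i}).gens = (M.gens.image fun g => g ⊔ (i ⊔ M.z)).erase (i ⊔ M.z) := by
  simp [contract_gens]

lemma delete_empty (M : GEL L) : M.delete ∅ = M :=
  ext' rfl (by simp [delete_gens])

lemma contract_empty (M : GEL L) : M.contract ∅ = M := by
  have hz : ((∅ : Finset L).sup id ⊔ M.z) = M.z := by simp
  apply ext'
  · simp [contract_z]
  · rw [contract_gens, hz]
    have himg : (M.gens.image fun g => g ⊔ M.z) = M.gens := by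
      have : ∀ g ∈ M.gens, g ⊔ M.z = g := fun g hg =>
        sup_eq_left.mpr (M.lt_gens g hg).le
      calc (M.gens.image fun g => g ⊔ M.z) = M.gens.image id :=
            Finset.image_congr (fun g hg => this g hg)
        _ = M.gens := Finset.image_id
    rw [himg, Finset.erase_eq_of_notMem]
    intro hz'
    exact absurd rfl (M.lt_gens M.z hz').ne

lemma step_card_le {M N : GEL L} (h : Step M N) : N.gens.card ≤ M.gens.card := by
  obtain ⟨I, hI, h | h⟩ := h <;> subst h
  · exact Finset.card_le_card (Finset.sdiff_subset)
  · calc ((M.gens.image _).erase _).card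
        ≤ (M.gens.image _).card := Finset.card_le_card (Finset.erase_subset _ _)
      _ ≤ M.gens.card := Finset.card_image_le

lemma minor_card_le {M N : GEL L} (h : Minor M N) : N.gens.card ≤ M.gens.card := by
  induction h with
  | refl => exact le_rfl
  | tail _ hstep ih => exact le_trans (step_card_le hstep) ih

lemma exists_first_step {M N : GEL L} (h : Minor M N) :
    N = M ∨ ∃ C, Step M C ∧ C ≠ M ∧ Minor C N := by
  induction h using Relation.ReflTransGen.head_induction_on with
  | refl => exact Or.inl rfl
  | head hstep htail ih =>
    rename_i Mx C
    by_cases hCM : C = Mx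
    · subst hCM
      rcases ih with h | ⟨D, hs, hne, hmin⟩
      · exact Or.inl h
      · exact Or.inr ⟨D, hs, hne, hmin⟩
    · exact Or.inr ⟨C, hstep, hCM, htail⟩

/-- A contraction can be decomposed: first contract a single generator. -/
lemma contract_decomp (M : GEL L) {I : Finset L} (hI : I ⊆ M.gens) {i : L} (hi : i ∈ I) :
    ∃ J ⊆ (M.contract {i}).gens, M.contract I = (M.contract {i}).contract J := by
  have hz1z' : i ⊔ M.z ≤ I.sup id ⊔ M.z :=
    sup_le_sup_right (Finset.le_sup (f := id) hi) _
  refine ⟨(I.image fun x => x ⊔ (i ⊔ M.z)).erase (i ⊔ M.z), ?_, ?_⟩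
  · rw [contract_gens']
    exact Finset.erase_subset_erase _ (Finset.image_subset_image hI)
  · have hzfield :
        ((I.image fun x => x ⊔ (i ⊔ M.z)).erase (i ⊔ M.z)).sup id ⊔ (i ⊔ M.z)
          = I.sup id ⊔ M.z := by
      apply le_antisymm
      · apply sup_le _ hz1z'
        apply Finset.sup_le
        intro j hj
        obtain ⟨x, hx, rfl⟩ := Finset.mem_image.mp (Finset.mem_of_mem_erase hj)
        exact sup_le (le_trans (Finset.le_sup (f := id) hx) le_sup_left) hz1z'
      · apply sup_le
        · apply Finset.sup_le
          intro x hx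
          by_cases hxx : x ⊔ (i ⊔ M.z) = i ⊔ M.z
          · exact le_trans (le_sup_left.trans hxx.le) le_sup_right
          · have hmem : x ⊔ (i ⊔ M.z)
                ∈ (I.image fun x => x ⊔ (i ⊔ M.z)).erase (i ⊔ M.z) :=
              Finset.mem_erase.mpr ⟨hxx, Finset.mem_image_of_mem _ hx⟩
            exact le_trans (le_sup_left.trans (Finset.le_sup (f := id) hmem)) le_sup_left
        · exact le_trans (le_sup_right : M.z ≤ i ⊔ M.z) le_sup_right
    apply ext'
    · rw [contract_z, contract_z, contract_z']
      exact hzfield.symm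
    · rw [contract_gens, contract_gens, contract_z', hzfield]
      ext y
      simp only [Finset.mem_erase, Finset.mem_image, contract_gens']
      constructor
      · rintro ⟨hy, g, hg, rfl⟩
        refine ⟨hy, g ⊔ (i ⊔ M.z), ⟨?_, g, hg, rfl⟩, ?_⟩
        · intro hgz1
          apply hy
          exact sup_eq_right.mpr (le_trans (le_sup_left.trans hgz1.le) hz1z')
        · rw [sup_assoc, sup_eq_right.mpr hz1z']
      · rintro ⟨hy, c, ⟨hcne, g, hg, rfl⟩, rfl⟩
        exact ⟨hy, g, hg, by rw [sup_assoc, sup_eq_right.mpr hz1z']⟩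

/-- If `g` has a parallel partner modulo `i ⊔ z`, then contracting `i` is unchanged
by first deleting `g`. -/
lemma contract_singleton_delete (M : GEL L) {i g h : L} (hg : g ∈ M.gens)
    (hh : h ∈ M.gens) (hhg : h ≠ g)
    (heq : g ⊔ (i ⊔ M.z) = h ⊔ (i ⊔ M.z)) :
    M.contract {i} = (M.delete {g}).contract {i} := by
  apply ext'
  · rw [contract_z', contract_z', delete_z]
  · rw [contract_gens', contract_gens', delete_z, delete_gens]
    ext y
    simp only [Finset.mem_erase, Finset.mem_image, Finset.mem_sdiff, Finset.mem_singleton]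
    constructor
    · rintro ⟨hy, k, hk, rfl⟩
      by_cases hkg : k = g
      · subst hkg
        exact ⟨hy, h, ⟨hh, hhg⟩, heq.symm⟩
      · exact ⟨hy, k, ⟨hk, hkg⟩, rfl⟩
    · rintro ⟨hy, k, ⟨hk, _⟩, rfl⟩
      exact ⟨hy, k, hk, rfl⟩

end GEL

/-- The minor poset `M(L,G)` is graded, with rank function `rk ∅ = 0` and
`rk (K,H) = |H| + 1`: the rank function is monotone, and increases by exactly
one along cover relations. -/
theorem minorPoset_graded {L : Type*} [Lattice L] [OrderBot L] [DecidableEq L]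
    (T : GEL L) :
    (∀ a b : GEL.MP T, GEL.mple T a b → GEL.mrank T a ≤ GEL.mrank T b) ∧
    (∀ a b : GEL.MP T, GEL.mple T a b → a ≠ b →
      (∀ c : GEL.MP T, GEL.mple T a c → GEL.mple T c b → c = a ∨ c = b) →
      GEL.mrank T b = GEL.mrank T a + 1) := by
  constructor
  · rintro (_ | A) (_ | B) h
    · exact le_rfl
    · exact Nat.zero_le _
    · exact h.elim
    · exact Nat.add_le_add_right (GEL.minor_card_le h) 1
  · rintro (_ | A) (_ | B) hle hne hcov
    · exact absurd rfl hne
    · -- a = none, b = some B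
      show B.1.gens.card + 1 = 0 + 1
      by_cases hB : B.1.gens = ∅
      · rw [hB, Finset.card_empty]
      · exfalso
        have hstep : GEL.Step B.1 (B.1.delete B.1.gens) :=
          ⟨B.1.gens, Finset.Subset.refl _, Or.inl rfl⟩
        have hmin : T.Minor (B.1.delete B.1.gens) :=
          Relation.ReflTransGen.trans B.2 (Relation.ReflTransGen.single hstep)
        have hres := hcov (some ⟨_, hmin⟩) trivial (Relation.ReflTransGen.single hstep)
        rcases hres with h | h
        · exact Option.some_ne_none _ h
        · have hg : (B.1.delete B.1.gens).gens = B.1.gens :=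
            congrArg GEL.gens (congrArg Subtype.val (Option.some.inj h))
          rw [GEL.delete_gens, Finset.sdiff_self] at hg
          exact hB hg.symm
    · exact hle.elim
    · -- a = some A, b = some B
      have hAB : GEL.Minor B.1 A.1 := hle
      have hABne : A.1 ≠ B.1 := fun h => hne (by rw [Option.some.injEq]; exact Subtype.ext h)
      have key : ∀ C : GEL L, GEL.Step B.1 C → C ≠ B.1 → GEL.Minor C A.1 → C = A.1 := by
        intro C hs hne1 hmin
        have hTC : T.Minor C := Relation.ReflTransGen.trans B.2 (Relation.ReflTransGen.single hs)
        rcases hcov (some ⟨C, hTC⟩) hmin (Relation.ReflTransGen.single hs) with h | h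
        · exact congrArg Subtype.val (Option.some.inj h)
        · exact absurd (congrArg Subtype.val (Option.some.inj h)) hne1
      obtain hA | ⟨C, hstep, hCneB0, hCA⟩ := GEL.exists_first_step hAB
      · exact absurd hA hABne
      have hCA' : C = A.1 := key C hstep hCneB0 hCA
      subst hCA'
      obtain ⟨I, hIsub, hdel | hcon⟩ := hstep
      · -- deletion case
        have hInon : I.Nonempty := by
          rcases I.eq_empty_or_nonempty with rfl | h
          · rw [GEL.delete_empty] at hdel; exact absurd hdel hABne
          · exact h
        obtain ⟨i, hi⟩ := hInon
        have hiB : i ∈ B.1.gens := hIsub hi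
        have hIi : I = {i} := by
          by_contra hne2
          obtain ⟨j, hj, hji⟩ : ∃ j ∈ I, j ≠ i := by
            by_contra hall
            push_neg at hall
            exact hne2 (Finset.eq_singleton_iff_unique_mem.mpr ⟨hi, hall⟩)
          have hstep1 : GEL.Step B.1 (B.1.delete {i}) :=
            ⟨{i}, Finset.singleton_subset_iff.mpr hiB, Or.inl rfl⟩
          have hstep2 : GEL.Step (B.1.delete {i}) A.1 := by
            refine ⟨I \ {i}, ?_, Or.inl ?_⟩
            · rw [GEL.delete_gens]
              exact Finset.sdiff_subset_sdiff hIsub (Finset.Subset.refl _)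
            · rw [hdel]
              refine GEL.ext' rfl ?_
              rw [GEL.delete_gens, GEL.delete_gens, GEL.delete_gens]
              ext x
              simp only [Finset.mem_sdiff, Finset.mem_singleton]
              constructor
              · rintro ⟨hx, hxI⟩
                exact ⟨⟨hx, fun h => hxI (h ▸ hi)⟩, fun h => hxI h.1⟩
              · rintro ⟨⟨hx, hxi⟩, hxI⟩
                exact ⟨hx, fun hxmem => hxI ⟨hxmem, hxi⟩⟩
          have hCne : B.1.delete {i} ≠ B.1 := by
            intro h
            have hg := congrArg GEL.gens h
            rw [GEL.delete_gens] at hg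
            have : i ∈ B.1.gens \ {i} := hg.symm ▸ hiB
            simp at this
          have hres := key _ hstep1 hCne (Relation.ReflTransGen.single hstep2)
          have hgens := congrArg GEL.gens hres
          rw [hdel, GEL.delete_gens, GEL.delete_gens] at hgens
          have hjmem : j ∈ B.1.gens \ {i} :=
            Finset.mem_sdiff.mpr ⟨hIsub hj, by simpa using hji⟩
          rw [hgens] at hjmem
          exact (Finset.mem_sdiff.mp hjmem).2 hj
        subst hIi
        show B.1.gens.card + 1 = (A.1.gens.card + 1) + 1
        have hA1gens : A.1.gens = B.1.gens.erase i := by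
          rw [hdel, GEL.delete_gens, Finset.sdiff_singleton_eq_erase]
        rw [hA1gens, Finset.card_erase_of_mem hiB]
        have hpos : 0 < B.1.gens.card := Finset.card_pos.mpr ⟨i, hiB⟩
        omega
      · -- contraction case
        have hInon : I.Nonempty := by
          rcases I.eq_empty_or_nonempty with rfl | h
          · rw [GEL.contract_empty] at hcon; exact absurd hcon hABne
          · exact h
        obtain ⟨i, hi⟩ := hInon
        have hiB : i ∈ B.1.gens := hIsub hi
        obtain ⟨J, hJsub, hJeq⟩ := GEL.contract_decomp B.1 hIsub hi
        have hzlt : B.1.z < i ⊔ B.1.z := lt_of_lt_of_le (B.1.lt_gens i hiB) le_sup_left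
        have hCneB : B.1.contract {i} ≠ B.1 := by
          intro h
          have hz := congrArg GEL.z h
          rw [GEL.contract_z'] at hz
          exact hzlt.ne' hz
        have hstep1 : GEL.Step B.1 (B.1.contract {i}) :=
          ⟨{i}, Finset.singleton_subset_iff.mpr hiB, Or.inr rfl⟩
        have hstep2 : GEL.Step (B.1.contract {i}) A.1 :=
          ⟨J, hJsub, Or.inr (hcon.trans hJeq)⟩
        have hA1 : B.1.contract {i} = A.1 :=
          key _ hstep1 hCneB (Relation.ReflTransGen.single hstep2)
        have hiz : i ⊔ (i ⊔ B.1.z) = i ⊔ B.1.z := by rw [← sup_assoc, sup_idem]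
        have hclaim : ∀ g ∈ B.1.gens, g ≠ i → ∀ h ∈ B.1.gens, h ≠ g →
            g ⊔ (i ⊔ B.1.z) ≠ h ⊔ (i ⊔ B.1.z) := by
          intro g hg hgi h hh hhg heq2
          have hdel1 : GEL.Step B.1 (B.1.delete {g}) :=
            ⟨{g}, Finset.singleton_subset_iff.mpr hg, Or.inl rfl⟩
          have hdeq : B.1.contract {i} = (B.1.delete {g}).contract {i} :=
            GEL.contract_singleton_delete B.1 hg hh hhg heq2
          have hdel2 : GEL.Step (B.1.delete {g}) A.1 := by
            refine ⟨{i}, ?_, Or.inr (hA1.symm.trans hdeq)⟩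
            rw [GEL.delete_gens]
            exact Finset.singleton_subset_iff.mpr
              (Finset.mem_sdiff.mpr ⟨hiB, by simpa using hgi.symm⟩)
          have hne2 : B.1.delete {g} ≠ B.1 := by
            intro h2
            have hg2 := congrArg GEL.gens h2
            rw [GEL.delete_gens] at hg2
            have : g ∈ B.1.gens \ {g} := hg2.symm ▸ hg
            simp at this
          have hres := key _ hdel1 hne2 (Relation.ReflTransGen.single hdel2)
          have hzz := congrArg GEL.z hres
          rw [GEL.delete_z, ← hA1, GEL.contract_z'] at hzz
          exact hzlt.ne hzz
        have hgeq : A.1.gens = (B.1.gens.erase i).image (fun g => g ⊔ (i ⊔ B.1.z)) := by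
          rw [← hA1, GEL.contract_gens']
          ext y
          simp only [Finset.mem_erase, Finset.mem_image]
          constructor
          · rintro ⟨hy, g, hg, rfl⟩
            refine ⟨g, ⟨?_, hg⟩, rfl⟩
            rintro rfl
            exact hy hiz
          · rintro ⟨g, ⟨hgi, hg⟩, rfl⟩
            refine ⟨?_, g, hg, rfl⟩
            have hne3 := hclaim g hg hgi i hiB (fun h => hgi h.symm)
            rw [hiz] at hne3
            exact hne3
        have hcard : A.1.gens.card = B.1.gens.card - 1 := by
          rw [hgeq, Finset.card_image_of_injOn, Finset.card_erase_of_mem hiB]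
          intro g hg h hh heq2
          by_contra hgh
          have hg' := Finset.mem_erase.mp (Finset.mem_coe.mp hg)
          have hh' := Finset.mem_erase.mp (Finset.mem_coe.mp hh)
          exact hclaim g hg'.2 hg'.1 h hh'.2 (fun h3 => hgh h3.symm) heq2
        show B.1.gens.card + 1 = (A.1.gens.card + 1) + 1
        have hpos : 0 < B.1.gens.card := Finset.card_pos.mpr ⟨i, hiB⟩
        omega
end

section
/- The minor poset of the Boolean algebra B_n with its minimal generating set (the atoms) is isomorphic to the face lattice of the n-dimensional cube, equivalently to the poset of nonempty intervals of B_n ordered by inclusion with an additional minimal element adjoined. -/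
open Finset

/-- The Boolean algebra `B_n` with its minimal generating set (the atoms). -/
def boolGEL (n : ℕ) : GEL (Finset (Fin n)) :=
  GEL.ofGens ((Finset.univ : Finset (Fin n)).image fun i => ({i} : Finset (Fin n)))
    (by
      intro g hg
      simp only [Finset.mem_image] at hg
      obtain ⟨i, -, rfl⟩ := hg
      exact bot_lt_iff_ne_bot.mpr (by simp [Finset.bot_eq_empty]))

/-- The face poset of the `n`-cube: nonempty intervals `[A,B]` of `B_n` ordered
by inclusion, with an adjoined minimum. -/
abbrev CubeFace (n : ℕ) := Option {p : Finset (Fin n) × Finset (Fin n) // p.1 ⊆ p.2}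

/-- The order relation on the face poset of the `n`-cube. -/
def cubeLE {n : ℕ} : CubeFace n → CubeFace n → Prop
  | none, _ => True
  | some _, none => False
  | some p, some q => q.1.1 ⊆ p.1.1 ∧ p.1.2 ⊆ q.1.2


/-
Every minor of `B_n` with its atoms as generators is an interval `[A, B]` of `B_n`, generated by
the elements `A ∪ {i}` with `i ∈ B \ A`: contracting the generators `A ∪ {i}`, `i ∈ T`, gives
`[A ∪ T, B]`, and deleting them gives `[A, B \ T]`. Conversely every nested interval is reached by
one contraction followed by one deletion. An interval is recovered from its minimum and from the
join of its generators, so minors correspond bijectively to intervals, and the minor order becomes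
reverse inclusion of the lower ends together with inclusion of the upper ends.
-/

namespace GEL

variable {L : Type*} [Lattice L] [DecidableEq L]

theorem ext_of_z_gens {M N : GEL L} (hz : M.z = N.z) (hg : M.gens = N.gens) : M = N := by
  cases M; cases N; simp_all

end GEL

section Interval

variable {α : Type*} [DecidableEq α]

def intervalGEL (A B : Finset α) : GEL (Finset α) :=
  ⟨A, (B \ A).image (insert · A), by
    simp only [Finset.mem_image, Finset.mem_sdiff]
    rintro _ ⟨i, ⟨-, hiA⟩, rfl⟩
    exact Finset.ssubset_insert hiA⟩

theorem sup_image_insert_sup_eq_union (A T : Finset α) :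
    (T.image (insert · A)).sup id ⊔ A = A ∪ T := by
  ext x
  simp only [Finset.sup_eq_union, Finset.mem_union, Finset.mem_sup, Finset.mem_image, id_eq]
  constructor
  · rintro (⟨_, ⟨i, hi, rfl⟩, hx⟩ | hx)
    · rcases Finset.mem_insert.mp hx with rfl | hx
      exacts [Or.inr hi, Or.inl hx]
    · exact Or.inl hx
  · rintro (hx | hx)
    exacts [Or.inr hx, Or.inl ⟨_, ⟨x, hx, rfl⟩, Finset.mem_insert_self x A⟩]

theorem sup_gens_intervalGEL {A B : Finset α} (hAB : A ⊆ B) :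
    (intervalGEL A B).gens.sup id ⊔ (intervalGEL A B).z = B := by
  rw [intervalGEL, sup_image_insert_sup_eq_union, Finset.union_sdiff_of_subset hAB]

theorem eq_and_eq_of_intervalGEL_eq {A B A' B' : Finset α} (hAB : A ⊆ B) (hA'B' : A' ⊆ B')
    (h : intervalGEL A B = intervalGEL A' B') : A = A' ∧ B = B' :=
  ⟨congrArg GEL.z h, by rw [← sup_gens_intervalGEL hAB, h, sup_gens_intervalGEL hA'B']⟩

theorem insert_sup_union (i : α) (A T : Finset α) :
    insert i A ⊔ (A ∪ T) = insert i (A ∪ T) := by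
  ext x; simp only [Finset.sup_eq_union, Finset.mem_union, Finset.mem_insert]; tauto

theorem contract_intervalGEL (A B T : Finset α) :
    (intervalGEL A B).contract (T.image (insert · A)) = intervalGEL (A ∪ T) B := by
  have hz : (T.image (insert · A)).sup id ⊔ A = A ∪ T := sup_image_insert_sup_eq_union A T
  refine GEL.ext_of_z_gens hz ?_
  simp only [GEL.contract, intervalGEL, hz]
  ext x
  simp only [Finset.mem_erase, Finset.mem_image, Finset.mem_sdiff, Finset.mem_union,
    insert_sup_union, exists_exists_and_eq_and, ne_eq, not_or]
  constructor
  · rintro ⟨hne, i, ⟨hiB, hiA⟩, rfl⟩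
    have hiT : i ∉ T := fun hiT => hne (Finset.insert_eq_self.mpr (Finset.mem_union_right A hiT))
    exact ⟨i, ⟨hiB, hiA, hiT⟩, rfl⟩
  · rintro ⟨i, ⟨hiB, hiA, hiT⟩, rfl⟩
    exact ⟨Finset.insert_ne_self.mpr (by simp [hiA, hiT]), i, ⟨hiB, hiA⟩, rfl⟩

theorem delete_intervalGEL {A B T : Finset α} (hT : T ⊆ B \ A) :
    (intervalGEL A B).delete (T.image (insert · A)) = intervalGEL A (B \ T) := by
  refine GEL.ext_of_z_gens rfl ?_
  have hinj : Set.InjOn (insert · A) ↑(B \ A) := fun i hi _ _ hij =>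
    (Finset.insert_inj (Finset.mem_sdiff.mp hi).2).mp hij
  simp only [GEL.delete, intervalGEL]
  rw [← Finset.image_sdiff_of_injOn hinj hT, sdiff_sdiff_comm]

theorem step_intervalGEL {A B : Finset α} (hAB : A ⊆ B) {N : GEL (Finset α)}
    (h : (intervalGEL A B).Step N) :
    ∃ A' B', A ⊆ A' ∧ A' ⊆ B' ∧ B' ⊆ B ∧ N = intervalGEL A' B' := by
  obtain ⟨I, hI, hN⟩ := h
  obtain ⟨T, hT, rfl⟩ := Finset.subset_image_iff.mp hI
  rcases hN with rfl | rfl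
  · have hAT : Disjoint A T := (Finset.subset_sdiff.mp hT).2.symm
    rw [delete_intervalGEL hT]
    exact ⟨A, B \ T, subset_rfl, Finset.subset_sdiff.mpr ⟨hAB, hAT⟩, Finset.sdiff_subset, rfl⟩
  · rw [contract_intervalGEL]
    exact ⟨A ∪ T, B, Finset.subset_union_left,
      Finset.union_subset hAB (hT.trans Finset.sdiff_subset), subset_rfl, rfl⟩

theorem exists_eq_intervalGEL_of_minor {A B : Finset α} (hAB : A ⊆ B) {N : GEL (Finset α)}
    (h : (intervalGEL A B).Minor N) :
    ∃ A' B', A ⊆ A' ∧ A' ⊆ B' ∧ B' ⊆ B ∧ N = intervalGEL A' B' := by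
  induction h with
  | refl => exact ⟨A, B, subset_rfl, hAB, subset_rfl, rfl⟩
  | tail _ hstep ih =>
    obtain ⟨A', B', hA, hA'B', hB, rfl⟩ := ih
    obtain ⟨A'', B'', hA', hA''B'', hB', rfl⟩ := step_intervalGEL hA'B' hstep
    exact ⟨A'', B'', hA.trans hA', hA''B'', hB'.trans hB, rfl⟩

theorem minor_intervalGEL {A B A' B' : Finset α} (hA : A ⊆ A') (hA'B' : A' ⊆ B') (hB : B' ⊆ B) :
    (intervalGEL A B).Minor (intervalGEL A' B') := by
  have hcontract : (intervalGEL A B).Step (intervalGEL A' B) := by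
    have hsub : A' \ A ⊆ B \ A := Finset.sdiff_subset_sdiff (hA'B'.trans hB) subset_rfl
    refine ⟨(A' \ A).image (insert · A), Finset.image_subset_image hsub, Or.inr ?_⟩
    rw [contract_intervalGEL, Finset.union_sdiff_of_subset hA]
  have hdelete : (intervalGEL A' B).Step (intervalGEL A' B') := by
    have hsub : B \ B' ⊆ B \ A' := Finset.sdiff_subset_sdiff subset_rfl hA'B'
    refine ⟨(B \ B').image (insert · A'), Finset.image_subset_image hsub, Or.inl ?_⟩
    rw [delete_intervalGEL hsub, Finset.sdiff_sdiff_eq_self hB]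
  exact .tail (.single hcontract) hdelete

theorem minor_intervalGEL_iff {A B A' B' : Finset α} (hAB : A ⊆ B) (hA'B' : A' ⊆ B') :
    (intervalGEL A B).Minor (intervalGEL A' B') ↔ A ⊆ A' ∧ B' ⊆ B := by
  refine ⟨fun h => ?_, fun ⟨hA, hB⟩ => minor_intervalGEL hA hA'B' hB⟩
  obtain ⟨A'', B'', hA, hA''B'', hB, heq⟩ := exists_eq_intervalGEL_of_minor hAB h
  obtain ⟨rfl, rfl⟩ := eq_and_eq_of_intervalGEL_eq hA'B' hA''B'' heq
  exact ⟨hA, hB⟩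

end Interval

theorem boolGEL_eq_intervalGEL (n : ℕ) : boolGEL n = intervalGEL ∅ Finset.univ := by
  refine GEL.ext_of_z_gens rfl ?_
  simp [boolGEL, GEL.ofGens, intervalGEL]

def intervalMinor (n : ℕ) (p : {p : Finset (Fin n) × Finset (Fin n) // p.1 ⊆ p.2}) :
    {M // (boolGEL n).Minor M} :=
  ⟨intervalGEL p.1.1 p.1.2, boolGEL_eq_intervalGEL n ▸
    minor_intervalGEL (Finset.empty_subset _) p.2 (Finset.subset_univ _)⟩

theorem intervalMinor_bijective (n : ℕ) : Function.Bijective (intervalMinor n) := by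
  constructor
  · rintro ⟨⟨A, B⟩, hAB⟩ ⟨⟨A', B'⟩, hA'B'⟩ h
    obtain ⟨rfl, rfl⟩ := eq_and_eq_of_intervalGEL_eq hAB hA'B' (congrArg Subtype.val h)
    rfl
  · rintro ⟨M, hM⟩
    rw [boolGEL_eq_intervalGEL] at hM
    obtain ⟨A, B, -, hAB, -, rfl⟩ := exists_eq_intervalGEL_of_minor (Finset.empty_subset _) hM
    exact ⟨⟨(A, B), hAB⟩, rfl⟩

/-- The minor poset of the Boolean algebra `B_n` with its minimal generating set
is isomorphic to the face lattice of the `n`-dimensional cube, i.e. the poset of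
nonempty intervals of `B_n` under inclusion with a minimum adjoined. -/
theorem minorPoset_boolean_iso_cube (n : ℕ) :
    ∃ e : GEL.MP (boolGEL n) ≃ CubeFace n,
      ∀ a b : GEL.MP (boolGEL n), GEL.mple (boolGEL n) a b ↔ cubeLE (e a) (e b) := by
  let e := Equiv.optionCongr (Equiv.ofBijective _ (intervalMinor_bijective n))
  refine ⟨e.symm, fun a b => ?_⟩
  obtain ⟨x, rfl⟩ := e.surjective a
  obtain ⟨y, rfl⟩ := e.surjective b
  rw [e.symm_apply_apply, e.symm_apply_apply]
  rcases x with _ | p <;> rcases y with _ | q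
  case some.some => exact minor_intervalGEL_iff q.2 p.2
  all_goals exact Iff.rfl
end
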